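/- arXiv:math/0510140 — 2 statements merged into one kernel-verified Lean document; each statement's English description precedes it below -/
import Mathlib

section
/- Let f, g be continuous subharmonic functions on an open subset of a Euclidean space with f, g > 0. Then for any 1 ≤ p < ∞ the function (f^p + g^p)^{1/p} is subharmonic. -/
open MeasureTheory
open scoped MeasureTheory ENNReal NNReal

lemma aux_integrable {α E : Type*} [MeasurableSpace α] [TopologicalSpace α]
    [OpensMeasurableSpace α] [SecondCountableTopology α]
    [NormedAddCommGroup E] {μ : Measure α} {s : Set α} (hs : MeasurableSet s)
    (hcomp : IsCompact s) (hμ : μ s ≠ ⊤) {u : α → E} (hu : ContinuousOn u s)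
    {c : ℝ≥0∞} (hc : c ≠ ⊤) : Integrable u (c • μ.restrict s) := by
  obtain ⟨C, hC⟩ := hcomp.exists_bound_of_continuousOn hu
  haveI : IsFiniteMeasure (μ.restrict s) :=
    ⟨by rwa [Measure.restrict_apply_univ, lt_top_iff_ne_top]⟩
  refine Integrable.smul_measure ?_ hc
  exact Integrable.mono' (integrable_const C) (hu.aestronglyMeasurable hs)
    ((ae_restrict_iff' hs).mpr (ae_of_all _ hC))


/-- Average of `u` over the sphere of center `x` and radius `r`, with respect to the
`(n-1)`-dimensional Hausdorff (surface) measure. -/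
noncomputable def sphereAverage (n : ℕ) (u : EuclideanSpace ℝ (Fin n) → ℝ)
    (x : EuclideanSpace ℝ (Fin n)) (r : ℝ) : ℝ :=
  ⨍ y in Metric.sphere x r, u y ∂(μH[(n : ℝ) - 1])

/-- A continuous function `u` on an open set `X ⊆ ℝⁿ` is subharmonic if it satisfies
the sub-mean-value property over boundary spheres of closed balls contained in `X`. -/
def SubharmonicOn (n : ℕ) (u : EuclideanSpace ℝ (Fin n) → ℝ)
    (X : Set (EuclideanSpace ℝ (Fin n))) : Prop :=
  ContinuousOn u X ∧
    ∀ x r, 0 < r → Metric.closedBall x r ⊆ X → u x ≤ sphereAverage n u x r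

/-- if `f, g > 0` are continuous subharmonic functions on an open subset of a
Euclidean space, then `(f^p + g^p)^{1/p}` is subharmonic for any `1 ≤ p < ∞`. -/
theorem stmt_8 (n : ℕ) (X : Set (EuclideanSpace ℝ (Fin n))) (hX : IsOpen X)
    (f g : EuclideanSpace ℝ (Fin n) → ℝ)
    (hf : SubharmonicOn n f X) (hg : SubharmonicOn n g X)
    (hfpos : ∀ x ∈ X, 0 < f x) (hgpos : ∀ x ∈ X, 0 < g x)
    (p : ℝ) (hp : 1 ≤ p) :
    SubharmonicOn n (fun x => (f x ^ p + g x ^ p) ^ (1 / p)) X := by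
  have hp0 : 0 < p := lt_of_lt_of_le one_pos hp
  constructor
  · exact ((hf.1.rpow_const fun x hx => Or.inr hp0.le).add
      (hg.1.rpow_const fun x hx => Or.inr hp0.le)).rpow_const
      fun x hx => Or.inr (by positivity)
  intro x r hr hball
  have hxX : x ∈ X := hball (Metric.mem_closedBall_self hr.le)
  set μ : Measure (EuclideanSpace ℝ (Fin n)) := μH[(n : ℝ) - 1] with hμdef
  set S := Metric.sphere x r with hSdef
  have hSX : S ⊆ X := fun y hy => hball (Metric.sphere_subset_closedBall hy)
  have hScomp : IsCompact S := isCompact_sphere x r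
  have hSmeas : MeasurableSet S := Metric.isClosed_sphere.measurableSet
  by_cases hm : (μ S).toReal = 0
  · exfalso
    have h1 : f x ≤ sphereAverage n f x r := hf.2 x r hr hball
    rw [sphereAverage, setAverage_eq, measureReal_def, hm] at h1
    simp at h1
    exact absurd h1 (not_le.mpr (hfpos x hxX))
  obtain ⟨hm0, hmtop⟩ := ENNReal.toReal_ne_zero.mp hm
  set ν : Measure (EuclideanSpace ℝ (Fin n)) := (μ S)⁻¹ • μ.restrict S with hνdef
  have havg : ∀ u : EuclideanSpace ℝ (Fin n) → ℝ,
      sphereAverage n u x r = ∫ y, u y ∂ν := fun u => setAverage_eq' μ u S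
  have hinv : (μ S)⁻¹ ≠ ⊤ := ENNReal.inv_ne_top.mpr hm0
  have hνint : ∀ {E : Type} [NormedAddCommGroup E] (u : EuclideanSpace ℝ (Fin n) → E),
      ContinuousOn u S → Integrable u ν := fun u hu =>
    aux_integrable hSmeas hScomp hmtop hu hinv
  -- the ℓ^p space
  set q : ℝ≥0∞ := ENNReal.ofReal p with hqdef
  haveI : Fact (1 ≤ q) := ⟨ENNReal.one_le_ofReal.mpr hp⟩
  have hq : q.toReal = p := ENNReal.toReal_ofReal hp0.le
  have hqpos : 0 < q.toReal := by rw [hq]; exact hp0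
  set F : EuclideanSpace ℝ (Fin n) → PiLp q (fun _ : Fin 2 => ℝ) :=
    fun y => WithLp.toLp q ![f y, g y] with hFdef
  have hFcont : ContinuousOn F S := by
    refine (PiLp.continuous_toLp q (fun _ : Fin 2 => ℝ)).comp_continuousOn ?_
    refine continuousOn_pi.mpr fun i => ?_
    fin_cases i
    · exact (hf.1.mono hSX)
    · exact (hg.1.mono hSX)
  have hFint : Integrable F ν := hνint F hFcont
  have hfint : Integrable f ν := hνint f (hf.1.mono hSX)
  have hgint : Integrable g ν := hνint g (hg.1.mono hSX)
  set A := ∫ y, f y ∂ν with hA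
  set B := ∫ y, g y ∂ν with hB
  have hfA : f x ≤ A := by rw [hA, ← havg]; exact hf.2 x r hr hball
  have hgB : g x ≤ B := by rw [hB, ← havg]; exact hg.2 x r hr hball
  have hApos : 0 < A := lt_of_lt_of_le (hfpos x hxX) hfA
  have hBpos : 0 < B := lt_of_lt_of_le (hgpos x hxX) hgB
  have hcoord0 : (∫ y, F y ∂ν) 0 = A := by
    have := (PiLp.proj q (𝕜 := ℝ) (fun _ : Fin 2 => ℝ) 0).integral_comp_comm hFint
    simpa [hFdef] using this.symm
  have hcoord1 : (∫ y, F y ∂ν) 1 = B := by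
    have := (PiLp.proj q (𝕜 := ℝ) (fun _ : Fin 2 => ℝ) 1).integral_comp_comm hFint
    simpa [hFdef] using this.symm
  have hae : ∀ᵐ y ∂ν, y ∈ S := by
    refine Measure.ae_smul_measure ?_ _
    exact (ae_restrict_iff' hSmeas).mpr (ae_of_all _ fun y hy => hy)
  rw [havg]
  calc (f x ^ p + g x ^ p) ^ (1 / p)
      ≤ (A ^ p + B ^ p) ^ (1 / p) := by
        refine Real.rpow_le_rpow (add_nonneg (Real.rpow_nonneg (hfpos x hxX).le p) (Real.rpow_nonneg (hgpos x hxX).le p)) ?_ (by positivity)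
        exact add_le_add (Real.rpow_le_rpow (hfpos x hxX).le hfA hp0.le)
          (Real.rpow_le_rpow (hgpos x hxX).le hgB hp0.le)
    _ = ‖∫ y, F y ∂ν‖ := by
        rw [PiLp.norm_eq_sum hqpos, Fin.sum_univ_two, hcoord0, hcoord1, hq,
          Real.norm_eq_abs, Real.norm_eq_abs, abs_of_pos hApos, abs_of_pos hBpos]
    _ ≤ ∫ y, ‖F y‖ ∂ν := norm_integral_le_integral_norm F
    _ = ∫ y, (f y ^ p + g y ^ p) ^ (1 / p) ∂ν := by
        refine integral_congr_ae (hae.mono fun y hy => ?_)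
        show ‖F y‖ = (f y ^ p + g y ^ p) ^ (1 / p)
        rw [PiLp.norm_eq_sum hqpos, Fin.sum_univ_two, hq]
        simp only [hFdef, PiLp.toLp_apply, Matrix.cons_val_zero, Matrix.cons_val_one, Matrix.head_cons,
          Real.norm_eq_abs, abs_of_pos (hfpos y (hSX hy)), abs_of_pos (hgpos y (hSX hy))]
end

section
/- Let V be a right quaternionic vector space, I, J, K the right multiplications by i, j, k ∈ ℍ on V. Let ω be a real (2,0)-form with respect to I, meaning ω is ℂ-bilinear alternating on (V, I) of type (2,0) and satisfies conj(J∘ω) = ω. Define B(X) := ω(X, X∘J). Then B is real-valued and invariant under right multiplication by I, J, and K, i.e., B(X∘I) = B(X∘J) = B(X∘K) = B(X) for all X ∈ V; hence B is the restriction to the diagonal of a hyperhermitian form on V. -/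
/-! With `B X = ω X (J X)`: `J`-invariance is antisymmetry together with `J² = -1`, and then the
reality condition `conj (J∘ω) = ω` at `(X, J X)` says exactly `conj (B X) = B X`. `I`-invariance
holds because `I` and `J` anticommute, so the two factors of `i` coming from the `(2,0)` type of `ω`
multiply to `-i² = 1`. Finally `K X = J (I X)` combines the two. -/

section DiagonalOfForm

variable {V : Type*} [AddCommGroup V] [Module ℝ V] {ω : V →ₗ[ℝ] V →ₗ[ℝ] ℂ} {I J : V →ₗ[ℝ] V}

theorem diag_map_eq_of_map_map_eq_neg (halt : ∀ X Y, ω X Y = -ω Y X)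
    (hJJ : ∀ X, J (J X) = -X) (X : V) : ω (J X) (J (J X)) = ω X (J X) := by
  rw [hJJ, map_neg, halt (J X) X, neg_neg]

theorem im_diag_eq_zero (halt : ∀ X Y, ω X Y = -ω Y X) (hJJ : ∀ X, J (J X) = -X)
    (hreal : ∀ X Y, starRingEnd ℂ (ω (J X) (J Y)) = ω X Y) (X : V) : (ω X (J X)).im = 0 := by
  have hconj := hreal X (J X)
  rw [diag_map_eq_of_map_map_eq_neg halt hJJ] at hconj
  exact Complex.conj_eq_iff_im.mp hconj

theorem diag_map_eq_of_anticomm (h20l : ∀ X Y, ω (I X) Y = Complex.I * ω X Y)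
    (h20r : ∀ X Y, ω X (I Y) = Complex.I * ω X Y) (hanti : ∀ X, J (I X) = -I (J X)) (X : V) :
    ω (I X) (J (I X)) = ω X (J X) := by
  rw [hanti, map_neg, h20r, h20l, ← mul_assoc, ← neg_mul, Complex.I_mul_I, neg_neg, one_mul]

end DiagonalOfForm

theorem stmt_11_general {V : Type*} [AddCommGroup V] [Module ℝ V]
    (I J K : V →ₗ[ℝ] V)
    (hJJ : ∀ X, J (J X) = -X)
    (hIJ : ∀ X, J (I X) = K X) (hJI : ∀ X, I (J X) = -K X)
    (ω : V →ₗ[ℝ] V →ₗ[ℝ] ℂ)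
    (halt : ∀ X Y, ω X Y = -ω Y X)
    (h20l : ∀ X Y, ω (I X) Y = Complex.I * ω X Y)
    (h20r : ∀ X Y, ω X (I Y) = Complex.I * ω X Y)
    (hreal : ∀ X Y, starRingEnd ℂ (ω (J X) (J Y)) = ω X Y) :
    ∀ X : V,
      (ω X (J X)).im = 0 ∧
      ω (I X) (J (I X)) = ω X (J X) ∧
      ω (J X) (J (J X)) = ω X (J X) ∧
      ω (K X) (J (K X)) = ω X (J X) := by
  have hanti : ∀ X, J (I X) = -I (J X) := fun X => by rw [hIJ, hJI, neg_neg]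
  have hIinv := diag_map_eq_of_anticomm h20l h20r hanti
  have hJinv := diag_map_eq_of_map_map_eq_neg halt hJJ
  intro X
  refine ⟨im_diag_eq_zero halt hJJ hreal X, hIinv X, hJinv X, ?_⟩
  rw [← hIJ, hJinv, hIinv]

/-- let `V` be a right quaternionic vector space, with `I, J, K` denoting
the operators of right multiplication by `i, j, k` (so that `op_{ab} = op_b ∘ op_a`,
e.g. `X∘(IJ) = (X∘I)∘J` and `IJ = K` gives `J (I X) = K X`). Let `ω` be a real
`(2,0)`-form with respect to `I`, i.e. an alternating `ℝ`-bilinear complex-valued form,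
`ℂ`-linear for the complex structure `I` in each argument, with `conj (J∘ω) = ω`.
Then `B(X) := ω(X, X∘J)` is real-valued and invariant under `I, J, K`. -/
theorem stmt_11 {V : Type*} [AddCommGroup V] [Module ℝ V]
    (I J K : V →ₗ[ℝ] V)
    (hII : ∀ X, I (I X) = -X) (hJJ : ∀ X, J (J X) = -X) (hKK : ∀ X, K (K X) = -X)
    (hIJ : ∀ X, J (I X) = K X) (hJI : ∀ X, I (J X) = -K X)
    (hJK : ∀ X, K (J X) = I X) (hKJ : ∀ X, J (K X) = -I X)
    (hKI : ∀ X, I (K X) = J X) (hIK : ∀ X, K (I X) = -J X)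
    (ω : V →ₗ[ℝ] V →ₗ[ℝ] ℂ)
    (halt : ∀ X Y, ω X Y = -ω Y X)
    (h20l : ∀ X Y, ω (I X) Y = Complex.I * ω X Y)
    (h20r : ∀ X Y, ω X (I Y) = Complex.I * ω X Y)
    (hreal : ∀ X Y, starRingEnd ℂ (ω (J X) (J Y)) = ω X Y) :
    ∀ X : V,
      (ω X (J X)).im = 0 ∧
      ω (I X) (J (I X)) = ω X (J X) ∧
      ω (J X) (J (J X)) = ω X (J X) ∧
      ω (K X) (J (K X)) = ω X (J X) :=
  stmt_11_general I J K hJJ hIJ hJI ω halt h20l h20r hreal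
end
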